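/- Let M ≥ 3, let π ∈ B_M be an M-bounded triangular ladder, and let yz be an outer boundary edge of L_π. Then the backward extension graph B_{π,yz} is balanced, i.e. m_{B_{π,yz}} ≥ m_K for every subextension K of B_{π,yz}. -/

import Mathlib

/-
Let `n = |π|`, so that `B = B_{π,y(n+1)}` has `n - 2` free vertices. Vertex `j + 1` of `L_π` is
joined downwards to `j` and, unless `π(j) = e`, to its apex. A subextension misses a set `R` of
`r` free vertices and all edges meeting `R`; sorting those edges by their top vertex shows that at
least `2r + k + F - α` of them are lost, where `k` is the number of maximal runs of `R`, `F` the
number of apex edges leaving `R` upwards and `α` the number of vertices of `R` entered after an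
`e`. With `ε` copies of `e` we have `e_B ≤ 2n - 1 - ε` and `n - 2 = (3 - ε)(M - 1)`, so
balancedness reduces to `r ≤ (M - 1)(k + F - α)`.

The absence of `M`-fans bounds the runs of zeros of `π`, hence the fans of `L_π`, so a run of `R`
that is long or contains a vertex entered after an `e` cannot lie inside one fan and some apex
edge escapes from it. Since `α ≤ ε ≤ 2` and `r ≤ n - 2`, a case analysis on `k ≤ 2` finishes.
-/

noncomputable section

namespace TriangleRemoval

/-- The alphabet `{e, 0, 1}` of triangular-ladder words. -/
inductive Sym : Type
  | e : Sym
  | zero : Sym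
  | one : Sym
deriving DecidableEq

/-- `nth π j` is the `j`-th symbol of `π` (1-based), if it exists. -/
def nth (π : List Sym) (j : ℕ) : Option Sym :=
  if j = 0 then none else π[j - 1]?

/-- One construction step of a triangular ladder. The state is
`(k, o, E)`: the last vertex `k`, the backward neighbor `o` of `k` other than `k - 1`
(junk if the last symbol was `e`), and the current edge set `E`. -/
def ladderStep : ℕ × ℕ × Set (Sym2 ℕ) → Sym → ℕ × ℕ × Set (Sym2 ℕ)
  | (k, _, E), Sym.one => (k + 1, k - 1, insert s(k - 1, k + 1) (insert s(k, k + 1) E))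
  | (k, o, E), Sym.zero => (k + 1, o, insert s(o, k + 1) (insert s(k, k + 1) E))
  | (k, _, E), Sym.e => (k + 1, 0, insert s(k, k + 1) E)

/-- The initial state of the construction, according to the first symbol:
`L_1` has edges `{02, 12}`, `L_e` has the single edge `12`. -/
def ladderInit : Sym → ℕ × ℕ × Set (Sym2 ℕ)
  | Sym.one => (2, 0, {s(0, 2), s(1, 2)})
  | _ => (2, 0, {s(1, 2)})

/-- The data of the triangular ladder built from the word `π`. -/
def ladderData : List Sym → ℕ × ℕ × Set (Sym2 ℕ)
  | [] => (1, 0, ∅)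
  | a :: rest => rest.foldl ladderStep (ladderInit a)

/-- The triangular ladder `L_π`, a graph on `{0, 1, …, |π|+1} ⊆ ℕ`. -/
def ladder (π : List Sym) : SimpleGraph ℕ :=
  SimpleGraph.fromEdgeSet (ladderData π).2.2

/-- `L_π` has an `f`-fan at the vertex `a > 0`. -/
def hasFanAt (π : List Sym) (f a : ℕ) : Prop :=
  0 < a ∧
    ((nth π (a - 2) ≠ some Sym.e ∧
        ∀ b ∈ Finset.Icc (a + 1) (a + f + 1), (ladder π).Adj a b) ∨
     (nth π (a - 2) = some Sym.e ∧ (ladder π).Adj a (a - 1) ∧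
        ∀ b ∈ Finset.Icc (a + 1) (a + f), (ladder π).Adj a b))

/-- `L_π` contains an `f`-fan. -/
def hasFan (π : List Sym) (f : ℕ) : Prop := ∃ a, hasFanAt π f a

/-- Membership in `Π`: no `0` in positions 1 or 2, at most two occurrences of `e`, and
no substrings `e0`, `e10`, `e1e`. -/
def memPi (π : List Sym) : Prop :=
  nth π 1 ≠ some Sym.zero ∧ nth π 2 ≠ some Sym.zero ∧ π.count Sym.e ≤ 2 ∧
    ¬ [Sym.e, Sym.zero] <:+: π ∧ ¬ [Sym.e, Sym.one, Sym.zero] <:+: π ∧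
    ¬ [Sym.e, Sym.one, Sym.e] <:+: π

/-- Membership in `B_M`: `π ∈ Π` is nonempty, contains no `M`-fan, and satisfies the
length restrictions according to the number of occurrences of `e`. -/
def memB (M : ℕ) (π : List Sym) : Prop :=
  memPi π ∧ π ≠ [] ∧ ¬ hasFan π M ∧
    ((π.count Sym.e = 0 ∧ π.length ≤ 3 * M - 1) ∨
     (π.count Sym.e = 1 ∧ π.length ≤ 2 * M ∧ nth π (2 * M) ≠ some Sym.e) ∨
     (π.count Sym.e = 2 ∧ π.length ≤ M + 1 ∧ nth π (M + 1) ≠ some Sym.e))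

/-- `π' = π_{z-1} ∘ 0` if `y < z-1` and `π' = π_{z-1} ∘ 1` if `y = z-1`. -/
def boundaryWord (π : List Sym) (y z : ℕ) : List Sym :=
  π.take (z - 1) ++ [if y < z - 1 then Sym.zero else Sym.one]

/-- `yz` is a boundary edge of `L_π` with respect to `B_M`. -/
def IsBoundaryEdge (M : ℕ) (π : List Sym) (y z : ℕ) : Prop :=
  0 < y ∧ y < z ∧ (ladder π).Adj y z ∧ nth π y ≠ some Sym.e ∧
    ¬ memB M (boundaryWord π y z)

/-- `yz` is an outer boundary edge of `L_π` with respect to `B_M`. -/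
def IsOuterBoundaryEdge (M : ℕ) (π : List Sym) (y z : ℕ) : Prop :=
  IsBoundaryEdge M π y z ∧ z = π.length + 1 ∧
    ((π.count Sym.e = 0 ∧ π.length = 3 * M - 1) ∨
     (π.count Sym.e = 1 ∧ π.length = 2 * M) ∨
     (π.count Sym.e = 2 ∧ π.length = M + 1))

/-- `yz` is a side boundary edge of `L_π` with respect to `B_M`. -/
def IsSideBoundaryEdge (M : ℕ) (π : List Sym) (y z : ℕ) : Prop :=
  IsBoundaryEdge M π y z ∧ ¬ IsOuterBoundaryEdge M π y z

/-- The edge set of the backward extension `B_{π,yz}`: the edges of `L_π` minus the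
edges with both endpoints in the distinguished set `I = {0, 1, y, z}`. -/
def backEdges (π : List Sym) (y z : ℕ) : Set (Sym2 ℕ) :=
  (ladder π).edgeSet \ {e | ∀ x ∈ e, x ∈ ({0, 1, y, z} : Finset ℕ)}

open Finset

section Words

variable {π : List Sym}

lemma nth_of_pos {j : ℕ} (hj : 1 ≤ j) : nth π j = π[j - 1]? := by
  simp [nth, Nat.one_le_iff_ne_zero.mp hj]

lemma mem_Icc_of_nth_eq_some {j : ℕ} {σ : Sym} (h : nth π j = some σ) :
    j ∈ Icc 1 π.length := by
  unfold nth at h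
  split_ifs at h with hj
  have := (List.getElem?_eq_some_iff.mp h).1
  simp only [mem_Icc]
  omega

lemma exists_nth_eq_some {j : ℕ} (hj : j ∈ Icc 1 π.length) : ∃ σ, nth π j = some σ := by
  rw [mem_Icc] at hj
  rw [nth_of_pos hj.1, List.getElem?_eq_getElem (by omega)]
  exact ⟨_, rfl⟩

lemma nth_append_of_le {j : ℕ} (hj : j ≤ π.length) (l : List Sym) :
    nth (π ++ l) j = nth π j := by
  rcases Nat.eq_zero_or_pos j with rfl | hj0
  · rfl
  · rw [nth_of_pos hj0, nth_of_pos hj0, List.getElem?_append_left (by omega)]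

lemma nth_append_singleton_length (σ : Sym) : nth (π ++ [σ]) (π.length + 1) = some σ := by
  simp [nth]

lemma infix_of_nth_eq_some {p : ℕ} {l : List Sym} (hp : 1 ≤ p) (hl : l ≠ [])
    (h : ∀ i (hi : i < l.length), nth π (p + i) = some l[i]) : l <:+: π := by
  have hlen : 0 < l.length := List.length_pos_iff.mpr hl
  refine List.infix_iff_getElem?.mpr ⟨p - 1, ?_, fun i hi => ?_⟩
  · have := mem_Icc.mp (mem_Icc_of_nth_eq_some (h (l.length - 1) (by omega)))
    omega
  · rw [← h i hi, nth_of_pos (by omega)]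
    congr 1
    omega

lemma card_filter_nth_eq (σ : Sym) :
    ((Icc 1 π.length).filter (fun j => nth π j = some σ)).card = π.count σ := by
  induction π using List.reverseRecOn with
  | nil => simp
  | append_singleton l τ ih =>
    rw [List.length_append, List.length_singleton, ← insert_Icc_right_eq_Icc_add_one (by omega),
      filter_insert, List.count_append, ← ih,
      filter_congr (fun j hj => by rw [nth_append_of_le (mem_Icc.mp hj).2])]
    by_cases hτ : τ = σ
    · subst hτ
      rw [if_pos (nth_append_singleton_length τ), card_insert_of_notMem (by simp)]
      simp
    · rw [if_neg (by rw [nth_append_singleton_length]; simpa using hτ)]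
      simpa [List.count_singleton] using hτ

lemma card_le_count_of_forall_nth_eq {σ : Sym} {S : Finset ℕ}
    (hS : ∀ p ∈ S, nth π p = some σ) : S.card ≤ π.count σ := by
  rw [← card_filter_nth_eq]
  exact card_le_card fun p hp => mem_filter.mpr ⟨mem_Icc_of_nth_eq_some (hS p hp), hS p hp⟩

lemma two_le_count_e {p q : ℕ} (hp : nth π p = some Sym.e) (hq : nth π q = some Sym.e)
    (hpq : p ≠ q) : 2 ≤ π.count Sym.e := by
  have := card_le_count_of_forall_nth_eq (π := π) (σ := Sym.e) (S := {p, q}) (by simp [hp, hq])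
  rwa [card_pair hpq] at this

lemma three_le_count_e {p q t : ℕ} (hp : nth π p = some Sym.e) (hq : nth π q = some Sym.e)
    (ht : nth π t = some Sym.e) (hpq : p < q) (hqt : q < t) : 3 ≤ π.count Sym.e := by
  have := card_le_count_of_forall_nth_eq (π := π) (σ := Sym.e) (S := {p, q, t})
    (by simp [hp, hq, ht])
  rwa [card_insert_of_notMem (by simp only [mem_insert, mem_singleton]; omega),
    card_pair (by omega)] at this

variable (hP : memPi π)
include hP

lemma count_e_le_two : π.count Sym.e ≤ 2 := hP.2.2.1

lemma nth_succ_ne_zero_of_e {p : ℕ} (hp : nth π p = some Sym.e) :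
    nth π (p + 1) ≠ some Sym.zero := fun h =>
  hP.2.2.2.1 <| infix_of_nth_eq_some (mem_Icc.mp (mem_Icc_of_nth_eq_some hp)).1 (l := [_, _])
    (by simp) fun i hi => by
      simp only [List.length_cons, List.length_nil] at hi
      interval_cases i <;> simpa

lemma nth_add_two_eq_one {p : ℕ} (hp : nth π p = some Sym.e)
    (hp1 : nth π (p + 1) = some Sym.one) (hp2 : p + 2 ≤ π.length) :
    nth π (p + 2) = some Sym.one := by
  have h1 := (mem_Icc.mp (mem_Icc_of_nth_eq_some hp)).1
  obtain ⟨σ, hσ⟩ := exists_nth_eq_some (π := π) (j := p + 2) (mem_Icc.mpr ⟨by omega, hp2⟩)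
  have hinfix : [Sym.e, Sym.one, σ] <:+: π :=
    infix_of_nth_eq_some h1 (by simp) fun i hi => by
      simp only [List.length_cons, List.length_nil] at hi
      interval_cases i <;> simpa
  cases σ
  · exact absurd hinfix hP.2.2.2.2.2
  · exact absurd hinfix hP.2.2.2.2.1
  · exact hσ

end Words

/-- `apex π j` is the neighbour of `j + 1` in `L_π` other than `j`; it is `0` when `π(j) = e`,
where there is no such neighbour. -/
def apex (π : List Sym) : ℕ → ℕ
  | 0 => 0
  | j + 1 =>
    match nth π (j + 1) with
    | some Sym.one => j
    | some Sym.zero => apex π j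
    | _ => 0

def spineEdge (j : ℕ) : Sym2 ℕ := s(j, j + 1)

def apexEdge (π : List Sym) (j : ℕ) : Sym2 ℕ := s(apex π j, j + 1)

def ladderEdges (π : List Sym) : Finset (Sym2 ℕ) :=
  (Icc 1 π.length).image spineEdge ∪
    ((Icc 1 π.length).filter (fun j => nth π j ≠ some Sym.e)).image (apexEdge π)

section Ladder

variable {π : List Sym}

lemma apex_succ_of_one {j : ℕ} (h : nth π (j + 1) = some Sym.one) : apex π (j + 1) = j := by
  simp [apex, h]

lemma apex_succ_of_zero {j : ℕ} (h : nth π (j + 1) = some Sym.zero) :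
    apex π (j + 1) = apex π j := by
  simp [apex, h]

lemma apex_le (j : ℕ) : apex π j ≤ j - 1 := by
  induction j with
  | zero => rfl
  | succ j ih =>
    unfold apex
    split <;> omega

lemma apex_append {l : List Sym} {j : ℕ} (hj : j ≤ π.length) : apex (π ++ l) j = apex π j := by
  induction j with
  | zero => rfl
  | succ j ih => simp only [apex, nth_append_of_le hj, ih (by omega)]

lemma spineEdge_injective : Function.Injective spineEdge := fun i j h => by
  unfold spineEdge at h
  rcases Sym2.eq_iff.mp h with ⟨h1, h2⟩ | ⟨h1, h2⟩ <;> omega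

lemma apexEdge_injective : Function.Injective (apexEdge π) := fun i j h => by
  have := apex_le (π := π) i
  have := apex_le (π := π) j
  unfold apexEdge at h
  rcases Sym2.eq_iff.mp h with ⟨h1, h2⟩ | ⟨h1, h2⟩ <;> omega

lemma spineEdge_ne_apexEdge (i : ℕ) {j : ℕ} (hj : 1 ≤ j) : spineEdge i ≠ apexEdge π j := fun h => by
  have := apex_le (π := π) j
  unfold spineEdge apexEdge at h
  rcases Sym2.eq_iff.mp h with ⟨h1, h2⟩ | ⟨h1, h2⟩ <;> omega

lemma mem_ladderEdges {x : Sym2 ℕ} :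
    x ∈ ladderEdges π ↔ ∃ j ∈ Icc 1 π.length,
      x = spineEdge j ∨ (nth π j ≠ some Sym.e ∧ x = apexEdge π j) := by
  simp only [ladderEdges, mem_union, mem_image, mem_filter]
  constructor
  · rintro (⟨j, hj, rfl⟩ | ⟨j, ⟨hj, he⟩, rfl⟩)
    exacts [⟨j, hj, .inl rfl⟩, ⟨j, hj, .inr ⟨he, rfl⟩⟩]
  · rintro ⟨j, hj, rfl | ⟨he, rfl⟩⟩
    exacts [.inl ⟨j, hj, rfl⟩, .inr ⟨j, ⟨hj, he⟩, rfl⟩]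

lemma ladderEdges_append_singleton (σ : Sym) :
    ladderEdges (π ++ [σ]) =
      insert (spineEdge (π.length + 1))
        ((if σ = Sym.e then ∅ else {apexEdge (π ++ [σ]) (π.length + 1)}) ∪ ladderEdges π) := by
  ext x
  simp only [mem_ladderEdges, mem_insert, mem_union,
    List.length_append, List.length_singleton, mem_Icc]
  constructor
  · rintro ⟨j, hj, hx⟩
    rcases (show j = π.length + 1 ∨ j ≤ π.length by omega) with rfl | hjn
    · rcases hx with hx | ⟨he, hx⟩
      · exact .inl hx
      · rw [nth_append_singleton_length] at he
        exact .inr (.inl (by simp [show σ ≠ Sym.e by simpa using he, hx]))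
    · rw [nth_append_of_le hjn, apexEdge, apex_append hjn] at hx
      exact .inr (.inr ⟨j, ⟨hj.1, hjn⟩, hx⟩)
  · rintro (hx | hx | ⟨j, hj, hx⟩)
    · exact ⟨_, ⟨by omega, le_rfl⟩, .inl hx⟩
    · split_ifs at hx with he
      · simp at hx
      · rw [mem_singleton] at hx
        exact ⟨_, ⟨by omega, le_rfl⟩,
          .inr ⟨by rw [nth_append_singleton_length]; simpa using he, hx⟩⟩
    · refine ⟨j, ⟨hj.1, by omega⟩, ?_⟩
      rwa [nth_append_of_le hj.2, apexEdge, apex_append hj.2]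

lemma ladderData_append_singleton (hne : π ≠ []) (σ : Sym) :
    ladderData (π ++ [σ]) = ladderStep (ladderData π) σ := by
  obtain ⟨a, t, rfl⟩ := List.exists_cons_of_ne_nil hne
  simp [ladderData, List.foldl_append]

lemma ladderData_eq (h1 : nth π 1 ≠ some Sym.zero) :
    ladderData π = (π.length + 1, apex π π.length, ↑(ladderEdges π)) := by
  induction π using List.reverseRecOn with
  | nil => simp [ladderData, ladderEdges, apex]
  | append_singleton l σ ih =>
    rcases eq_or_ne l [] with rfl | hl
    · rw [List.nil_append]
      cases σ
      · rw [show ladderEdges [Sym.e] = {s(1, 2)} by decide]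
        simp [ladderData, ladderInit, apex, nth]
      · simp [nth] at h1
      · rw [show ladderEdges [Sym.one] = {s(0, 2), s(1, 2)} by decide]
        simp [ladderData, ladderInit, apex, nth]
    have h1' : nth l 1 ≠ some Sym.zero := by
      rwa [← nth_append_of_le (List.length_pos_iff.mpr hl) [σ]]
    rw [ladderData_append_singleton hl, ih h1', ladderEdges_append_singleton, apexEdge]
    have hlast := nth_append_singleton_length (π := l) σ
    push_cast
    cases σ
    · simp [ladderStep, spineEdge, apex, hlast]
    · simp [ladderStep, spineEdge, apex_succ_of_zero hlast, apex_append, Set.insert_comm]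
    · simp [ladderStep, spineEdge, apex_succ_of_one hlast, Set.insert_comm]

lemma edgeSet_ladder (h1 : nth π 1 ≠ some Sym.zero) :
    (ladder π).edgeSet = ladderEdges π := by
  rw [ladder, SimpleGraph.edgeSet_fromEdgeSet, ladderData_eq h1, sdiff_eq_left,
    Set.disjoint_left]
  intro x hx hdiag
  obtain ⟨j, -, rfl | ⟨-, rfl⟩⟩ := mem_ladderEdges.mp hx
  · simp [spineEdge] at hdiag
  · have := apex_le (π := π) j
    simp only [apexEdge, Sym2.mem_diagSet, Sym2.mk_isDiag_iff] at hdiag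
    omega

lemma ladder_adj_iff (h1 : nth π 1 ≠ some Sym.zero) {u w : ℕ} :
    (ladder π).Adj u w ↔ s(u, w) ∈ ladderEdges π := by
  rw [← SimpleGraph.mem_edgeSet, edgeSet_ladder h1, Finset.mem_coe]

lemma adj_succ (h1 : nth π 1 ≠ some Sym.zero) {j : ℕ} (hj : j ∈ Icc 1 π.length) :
    (ladder π).Adj j (j + 1) :=
  (ladder_adj_iff h1).mpr (mem_ladderEdges.mpr ⟨j, hj, .inl rfl⟩)

lemma adj_apex (h1 : nth π 1 ≠ some Sym.zero) {j : ℕ} (hj : j ∈ Icc 1 π.length)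
    (he : nth π j ≠ some Sym.e) : (ladder π).Adj (apex π j) (j + 1) :=
  (ladder_adj_iff h1).mpr (mem_ladderEdges.mpr ⟨j, hj, .inr ⟨he, rfl⟩⟩)

lemma eq_or_eq_apex_of_adj_top (h1 : nth π 1 ≠ some Sym.zero) {y : ℕ}
    (hy : (ladder π).Adj y (π.length + 1)) :
    y = π.length ∨ (nth π π.length ≠ some Sym.e ∧ y = apex π π.length) := by
  obtain ⟨j, hj, hx | ⟨he, hx⟩⟩ := mem_ladderEdges.mp ((ladder_adj_iff h1).mp hy)
  all_goals
    have := apex_le (π := π) j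
    rw [mem_Icc] at hj
    simp only [spineEdge, apexEdge] at hx
  · rcases Sym2.eq_iff.mp hx with ⟨h, h'⟩ | ⟨h, h'⟩ <;> omega
  · rcases Sym2.eq_iff.mp hx with ⟨h, h'⟩ | ⟨-, h⟩
    · obtain rfl : j = π.length := by omega
      exact .inr ⟨he, h⟩
    · omega

lemma card_ladderEdges_add_count_le (π : List Sym) :
    (ladderEdges π).card + π.count Sym.e ≤ 2 * π.length := by
  have h := card_filter_add_card_filter_not (s := Icc 1 π.length)
    (p := fun j => nth π j = some Sym.e)
  rw [card_filter_nth_eq, Nat.card_Icc] at h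
  have := card_union_le ((Icc 1 π.length).image spineEdge)
    (((Icc 1 π.length).filter (fun j => nth π j ≠ some Sym.e)).image (apexEdge π))
  have := card_image_le (s := (Icc 1 π.length).filter (fun j => nth π j ≠ some Sym.e))
    (f := apexEdge π)
  have := card_image_le (s := Icc 1 π.length) (f := spineEdge)
  rw [Nat.card_Icc] at this
  unfold ladderEdges
  simp only [ne_eq] at *
  omega

lemma backEdges_subset (h1 : nth π 1 ≠ some Sym.zero) (y z : ℕ) :
    backEdges π y z ⊆ ↑((ladderEdges π).erase s(y, z)) := by
  rintro x ⟨hx, hxI⟩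
  rw [edgeSet_ladder h1] at hx
  refine mem_erase.mpr ⟨fun h => hxI ?_, hx⟩
  subst h
  simp

lemma ncard_backEdges_add_le (h1 : nth π 1 ≠ some Sym.zero) {z : ℕ}
    (hadj : (ladder π).Adj y z) :
    (backEdges π y z).ncard + 1 + π.count Sym.e ≤ 2 * π.length := by
  have hyz : s(y, z) ∈ ladderEdges π := (ladder_adj_iff h1).mp hadj
  have := Set.ncard_le_ncard (backEdges_subset h1 y z) (Finset.finite_toSet _)
  rw [Set.ncard_coe_finset, card_erase_of_mem hyz] at this
  have := card_ladderEdges_add_count_le π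
  have := card_pos.mpr ⟨_, hyz⟩
  omega

end Ladder

section ZeroRuns

variable {π : List Sym} (hP : memPi π)
include hP

lemma apex_of_nth_eq_zero {j : ℕ} (hj : nth π j = some Sym.zero) :
    1 ≤ apex π j ∧ apex π j + 2 ≤ j ∧ nth π (apex π j + 1) = some Sym.one ∧
      ∀ i ∈ Icc (apex π j + 2) j, nth π i = some Sym.zero ∧ apex π i = apex π j := by
  induction j with
  | zero => simp [nth] at hj
  | succ j ih =>
    rw [apex_succ_of_zero hj]
    have hj2 : 2 ≤ j := by
      by_contra h
      interval_cases j
      exacts [hP.1 hj, hP.2.1 hj]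
    have hjn := (mem_Icc.mp (mem_Icc_of_nth_eq_some hj)).2
    obtain ⟨σ, hσ⟩ := exists_nth_eq_some (π := π) (j := j) (mem_Icc.mpr ⟨by omega, by omega⟩)
    cases σ with
    | e => exact absurd hj (nth_succ_ne_zero_of_e hP hσ)
    | one =>
      obtain ⟨k, rfl⟩ : ∃ k, j = k + 1 := ⟨j - 1, by omega⟩
      rw [apex_succ_of_one hσ]
      refine ⟨by omega, le_rfl, hσ, fun i hi => ?_⟩
      obtain rfl : i = k + 2 := by rw [mem_Icc] at hi; omega
      exact ⟨hj, by rw [apex_succ_of_zero hj, apex_succ_of_one hσ]⟩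
    | zero =>
      obtain ⟨hv1, hv2, hv3, hrun⟩ := ih hσ
      refine ⟨hv1, by omega, hv3, fun i hi => ?_⟩
      rw [mem_Icc] at hi
      rcases eq_or_lt_of_le hi.2 with rfl | hlt
      · exact ⟨hj, apex_succ_of_zero hj⟩
      · exact hrun i (mem_Icc.mpr ⟨hi.1, by omega⟩)

lemma adj_apex_of_nth_eq_zero {j : ℕ} (hj : nth π j = some Sym.zero) :
    ∀ i ∈ Icc (apex π j + 1) (j + 1), (ladder π).Adj (apex π j) i := by
  obtain ⟨hv1, hv2, hv3, hrun⟩ := apex_of_nth_eq_zero hP hj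
  have hjn := (mem_Icc.mp (mem_Icc_of_nth_eq_some hj)).2
  intro i hi
  rw [mem_Icc] at hi
  rcases (show i = apex π j + 1 ∨ i = apex π j + 2 ∨ apex π j + 3 ≤ i by omega)
    with rfl | rfl | hi3
  · exact adj_succ hP.1 (mem_Icc.mpr ⟨hv1, by omega⟩)
  · have := adj_apex hP.1 (j := apex π j + 1) (mem_Icc.mpr ⟨by omega, by omega⟩)
      (by simp [hv3])
    rwa [apex_succ_of_one hv3] at this
  · obtain ⟨hi0, hiv⟩ := hrun (i - 1) (mem_Icc.mpr ⟨by omega, by omega⟩)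
    have := adj_apex hP.1 (j := i - 1) (mem_Icc.mpr ⟨by omega, by omega⟩) (by simp [hi0])
    rwa [hiv, Nat.sub_add_cancel (by omega)] at this

lemma hasFan_of_adj {a f : ℕ} (ha : a ∈ Icc 1 π.length)
    (hadj : ∀ b ∈ Icc (a + 1) (a + f), (ladder π).Adj a b)
    (hlast : nth π (a - 2) ≠ some Sym.e → (ladder π).Adj a (a + f + 1)) : hasFan π f := by
  rw [mem_Icc] at ha
  refine ⟨a, ha.1, ?_⟩
  by_cases he : nth π (a - 2) = some Sym.e
  · have := (mem_Icc.mp (mem_Icc_of_nth_eq_some he)).1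
    refine .inr ⟨he, ?_, hadj⟩
    have := adj_succ hP.1 (j := a - 1) (mem_Icc.mpr ⟨by omega, by omega⟩)
    rw [Nat.sub_add_cancel (by omega)] at this
    exact this.symm
  · refine .inl ⟨he, fun b hb => ?_⟩
    rw [mem_Icc] at hb
    rcases eq_or_lt_of_le hb.2 with rfl | hlt
    · exact hlast he
    · exact hadj b (mem_Icc.mpr ⟨hb.1, by omega⟩)

/-- `apex π j` is the centre of a fan through `apex π j + 1, …, j + 1`. -/
lemma le_apex_add_of_nth_eq_zero {M j : ℕ} (hfan : ¬ hasFan π M) (hj : nth π j = some Sym.zero) :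
    j + 1 ≤ apex π j + M ∧ (nth π (apex π j - 2) = some Sym.e → j + 2 ≤ apex π j + M) := by
  obtain ⟨hv1, hv2, -, -⟩ := apex_of_nth_eq_zero hP hj
  have hjn := (mem_Icc.mp (mem_Icc_of_nth_eq_some hj)).2
  have hadj := adj_apex_of_nth_eq_zero hP hj
  have hv : apex π j ∈ Icc 1 π.length := mem_Icc.mpr ⟨hv1, by omega⟩
  constructor
  · by_contra h
    exact hfan (hasFan_of_adj hP hv (fun b hb => hadj b (by simp only [mem_Icc] at hb ⊢; omega))
      fun _ => hadj _ (mem_Icc.mpr ⟨by omega, by omega⟩))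
  · intro he
    by_contra h
    exact hfan (hasFan_of_adj hP hv (fun b hb => hadj b (by simp only [mem_Icc] at hb ⊢; omega))
      fun hne => absurd he hne)

end ZeroRuns

def rightEnds (R : Finset ℕ) : Finset ℕ := R.filter (· + 1 ∉ R)

section Runs

variable {R : Finset ℕ}

lemma exists_mem_rightEnds {u w : ℕ} (hu : u ∈ R) (hw : w ∉ R) (huw : u < w) :
    ∃ c ∈ rightEnds R, u ≤ c ∧ c < w := by
  obtain ⟨d, rfl⟩ : ∃ d, w = u + d + 1 := ⟨w - u - 1, by omega⟩
  induction d generalizing u with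
  | zero => exact ⟨u, mem_filter.mpr ⟨hu, hw⟩, le_rfl, by omega⟩
  | succ d ih =>
    by_cases hu1 : u + 1 ∈ R
    · obtain ⟨c, hc, h1, h2⟩ := ih hu1 (by rwa [show u + 1 + d + 1 = u + (d + 1) + 1 by ring])
        (by omega)
      exact ⟨c, hc, by omega, by omega⟩
    · exact ⟨u, mem_filter.mpr ⟨hu, hu1⟩, le_rfl, by omega⟩

lemma Icc_subset_of_forall_rightEnds {a b : ℕ} (ha : a ∈ R)
    (h : ∀ c ∈ rightEnds R, c < a ∨ b ≤ c) : Icc a b ⊆ R := by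
  intro w hw
  rw [mem_Icc] at hw
  by_contra hwR
  obtain ⟨c, hc, h1, h2⟩ := exists_mem_rightEnds ha hwR (by
    rcases eq_or_lt_of_le hw.1 with rfl | h
    exacts [absurd ha hwR, h])
  rcases h c hc with h3 | h3 <;> omega

lemma max'_mem_rightEnds (hR : R.Nonempty) : R.max' hR ∈ rightEnds R :=
  mem_filter.mpr ⟨R.max'_mem hR, fun h => by have := R.le_max' _ h; omega⟩

lemma eq_Icc_of_card_rightEnds_eq_one (hk : (rightEnds R).card = 1) :
    ∃ a b, a ≤ b ∧ R = Icc a b := by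
  obtain ⟨c, hc⟩ := card_eq_one.mp hk
  have hR : R.Nonempty := nonempty_of_ne_empty (by rintro rfl; simp [rightEnds] at hc)
  have hmax : R.max' hR = c := by simpa [hc] using max'_mem_rightEnds hR
  refine ⟨R.min' hR, R.max' hR, R.min'_le _ (R.max'_mem hR), ?_⟩
  refine Subset.antisymm (fun w hw => mem_Icc.mpr ⟨R.min'_le w hw, R.le_max' w hw⟩) ?_
  refine Icc_subset_of_forall_rightEnds (R.min'_mem hR) fun c' hc' => .inr ?_
  rw [hc, mem_singleton] at hc'
  omega

lemma eq_Icc_union_Icc_of_card_rightEnds_eq_two (hk : (rightEnds R).card = 2) :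
    ∃ a₁ b₁ a₂ b₂, a₁ ≤ b₁ ∧ b₁ + 2 ≤ a₂ ∧ a₂ ≤ b₂ ∧ R = Icc a₁ b₁ ∪ Icc a₂ b₂ := by
  obtain ⟨c₁, c₂, hlt, hc⟩ : ∃ c₁ c₂, c₁ < c₂ ∧ rightEnds R = {c₁, c₂} := by
    obtain ⟨c₁, c₂, hne, hc⟩ := card_eq_two.mp hk
    rcases lt_or_gt_of_ne hne with h | h
    exacts [⟨c₁, c₂, h, hc⟩, ⟨c₂, c₁, h, by rw [hc, pair_comm]⟩]
  have hmem : ∀ c ∈ rightEnds R, c ∈ R ∧ c + 1 ∉ R := fun c hc => mem_filter.mp hc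
  obtain ⟨hc₁R, hc₁⟩ := hmem c₁ (by simp [hc])
  have hc₂R := (hmem c₂ (by simp [hc])).1
  have hR : R.Nonempty := ⟨c₁, hc₁R⟩
  have hmax : R.max' hR = c₂ := by
    have := max'_mem_rightEnds hR
    rw [hc, mem_insert, mem_singleton] at this
    have := R.le_max' _ hc₂R
    omega
  have hS : (R.filter (c₁ < ·)).Nonempty := ⟨c₂, mem_filter.mpr ⟨hc₂R, hlt⟩⟩
  obtain ⟨ha₂R, ha₂⟩ := mem_filter.mp ((R.filter (c₁ < ·)).min'_mem hS)
  set a₂ := (R.filter (c₁ < ·)).min' hS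
  have ha₂c₂ : a₂ ≤ c₂ := min'_le _ _ (mem_filter.mpr ⟨hc₂R, hlt⟩)
  have hends : ∀ c ∈ rightEnds R, c = c₁ ∨ c = c₂ := by simp [hc]
  refine ⟨R.min' hR, c₁, a₂, c₂, R.min'_le _ hc₁R, ?_, ha₂c₂, ?_⟩
  · rcases (show a₂ = c₁ + 1 ∨ c₁ + 2 ≤ a₂ by omega) with h | h
    exacts [absurd (h ▸ ha₂R) hc₁, h]
  refine Subset.antisymm (fun w hw => ?_) (union_subset ?_ ?_)
  · rw [mem_union, mem_Icc, mem_Icc]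
    by_cases hw₁ : w ≤ c₁
    · exact .inl ⟨R.min'_le w hw, hw₁⟩
    · exact .inr ⟨min'_le _ _ (mem_filter.mpr ⟨hw, by omega⟩), hmax ▸ R.le_max' w hw⟩
  · refine Icc_subset_of_forall_rightEnds (R.min'_mem hR) fun c hc => .inr ?_
    rcases hends c hc with rfl | rfl <;> omega
  · refine Icc_subset_of_forall_rightEnds ha₂R fun c hc => ?_
    rcases hends c hc with rfl | rfl <;> omega

lemma succ_mem_of_mem_image_pred {T : Finset ℕ} (hT : 0 ∉ T) {j : ℕ}
    (hj : j ∈ T.image (· - 1)) : j + 1 ∈ T := by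
  obtain ⟨w, hw, rfl⟩ := mem_image.mp hj
  rwa [Nat.sub_add_cancel (Nat.one_le_iff_ne_zero.mpr (ne_of_mem_of_not_mem hw hT))]

lemma card_image_pred {T : Finset ℕ} (hT : 0 ∉ T) : (T.image (· - 1)).card = T.card :=
  card_image_of_injOn fun u hu v hv huv => by
    have := ne_of_mem_of_not_mem hu hT
    have := ne_of_mem_of_not_mem hv hT
    omega

end Runs

/-- The apex edges leaving `R` upwards, indexed by their top vertex minus one. -/
def escapes (π : List Sym) (R : Finset ℕ) : Finset ℕ :=
  (Icc 1 π.length).filter (fun j => nth π j ≠ some Sym.e ∧ apex π j ∈ R ∧ j + 1 ∉ R)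

/-- The vertices of `R` with a single backward edge. -/
def afterE (π : List Sym) (R : Finset ℕ) : Finset ℕ :=
  R.filter (fun w => nth π (w - 1) = some Sym.e)

/-- The interval `[a, b]` cannot lie inside the fan of a run of zeros centred below `a`. -/
def IsDeep (M : ℕ) (π : List Sym) (a b : ℕ) : Prop :=
  a + M ≤ b + 1 ∨ (a + M ≤ b + 2 ∧ nth π (a - 3) = some Sym.e) ∨
    ∃ w ∈ Icc a b, nth π (w - 1) = some Sym.e

/-- The edges of `L_π` meeting `R`: spine and apex edges ending in `R`, then spine and apex
edges leaving `R` upwards. -/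
def edgesMeeting (π : List Sym) (R : Finset ℕ) : Finset (Sym2 ℕ) :=
  (R.image (· - 1) ∪ rightEnds R).image spineEdge ∪
    ((R \ afterE π R).image (· - 1) ∪ escapes π R).image (apexEdge π)

section Escapes

variable {M : ℕ} {π : List Sym} {R : Finset ℕ}

lemma mem_escapes {j : ℕ} : j ∈ escapes π R ↔
    j ∈ Icc 1 π.length ∧ nth π j ≠ some Sym.e ∧ apex π j ∈ R ∧ j + 1 ∉ R :=
  mem_filter

lemma succ_mem_escapes {b : ℕ} (hbR : b ∈ R) (hb2 : b + 2 ∉ R) (hbn : b + 1 ≤ π.length)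
    (h : nth π (b + 1) = some Sym.one) : b + 1 ∈ escapes π R :=
  mem_escapes.mpr ⟨mem_Icc.mpr ⟨by omega, hbn⟩, by simp [h], by rwa [apex_succ_of_one h], hb2⟩

lemma isDeep_of_mem_afterE {a b w : ℕ} (hw : w ∈ afterE π R) (hwab : w ∈ Icc a b) :
    IsDeep M π a b :=
  .inr (.inr ⟨w, hwab, (mem_filter.mp hw).2⟩)

lemma card_afterE_add_card_le (h0 : 0 ∉ R) {T : Finset ℕ}
    (hT : ∀ p ∈ T, nth π p = some Sym.e ∧ p + 1 ∉ R) :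
    (afterE π R).card + T.card ≤ π.count Sym.e := by
  have hinj : Set.InjOn (· - 1) (afterE π R : Set ℕ) := fun u hu v hv huv => by
    have := ne_of_mem_of_not_mem (mem_filter.mp hu).1 h0
    have := ne_of_mem_of_not_mem (mem_filter.mp hv).1 h0
    simp only at huv
    omega
  have hdisj : Disjoint ((afterE π R).image (· - 1)) T := by
    refine disjoint_left.mpr fun p hp hpT => (hT p hpT).2 ?_
    obtain ⟨w, hw, rfl⟩ := mem_image.mp hp
    have := ne_of_mem_of_not_mem (mem_filter.mp hw).1 h0
    rw [Nat.sub_add_cancel (by omega)]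
    exact (mem_filter.mp hw).1
  rw [← card_image_of_injOn hinj, ← card_union_of_disjoint hdisj]
  refine card_le_count_of_forall_nth_eq fun p hp => ?_
  rcases mem_union.mp hp with hp | hp
  · obtain ⟨w, hw, rfl⟩ := mem_image.mp hp
    exact (mem_filter.mp hw).2
  · exact (hT p hp).1

lemma le_apex_of_isDeep (hP : memPi π) (hfan : ¬ hasFan π M) {a b : ℕ} (hab : a < b)
    (hb : b ∈ Icc 1 π.length) (hbe : nth π b ≠ some Sym.e) (hdeep : IsDeep M π a b) :
    a ≤ apex π b := by
  obtain ⟨σ, hσ⟩ := exists_nth_eq_some hb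
  rw [mem_Icc] at hb
  cases σ with
  | e => exact absurd hσ hbe
  | one =>
    obtain ⟨k, rfl⟩ : ∃ k, b = k + 1 := ⟨b - 1, by omega⟩
    rw [apex_succ_of_one hσ]
    omega
  | zero =>
    obtain ⟨hv1, hv2, hv3, hrun⟩ := apex_of_nth_eq_zero hP hσ
    obtain ⟨hspan, hspan_e⟩ := le_apex_add_of_nth_eq_zero hP hfan hσ
    by_contra! hlt
    rcases hdeep with hlong | ⟨hlong, he⟩ | ⟨w, hw, he⟩
    · omega
    · rcases (show apex π b = a - 1 ∨ apex π b + 2 ≤ a by omega) with hv | hv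
      · have := hspan_e (by rwa [hv, show a - 1 - 2 = a - 3 by omega])
        omega
      · omega
    · rw [mem_Icc] at hw
      rcases (show w - 1 = apex π b ∨ w - 1 = apex π b + 1 ∨ apex π b + 2 ≤ w - 1 by omega)
        with h | h | h
      · rw [h] at he
        have h1 := nth_add_two_eq_one hP he hv3 (by omega)
        rw [(hrun (apex π b + 2) (mem_Icc.mpr ⟨le_rfl, hv2⟩)).1] at h1
        simp at h1
      · rw [h, hv3] at he
        simp at he
      · rw [(hrun (w - 1) (mem_Icc.mpr ⟨h, by omega⟩)).1] at he
        simp at he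

lemma card_edgesMeeting (hR : ∀ w ∈ R, 2 ≤ w) :
    (edgesMeeting π R).card + (afterE π R).card =
      2 * R.card + (rightEnds R).card + (escapes π R).card := by
  have h0 : 0 ∉ R := fun h => by have := hR 0 h; omega
  have h0' : 0 ∉ R \ afterE π R := fun h => h0 (mem_sdiff.mp h).1
  have hspine : Disjoint (R.image (· - 1)) (rightEnds R) := disjoint_left.mpr fun j hj hj' =>
    (mem_filter.mp hj').2 (succ_mem_of_mem_image_pred h0 hj)
  have hapex : Disjoint ((R \ afterE π R).image (· - 1)) (escapes π R) :=
    disjoint_left.mpr fun j hj hj' => (mem_filter.mp hj').2.2.2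
      (mem_sdiff.mp (succ_mem_of_mem_image_pred h0' hj)).1
  have hboth : Disjoint ((R.image (· - 1) ∪ rightEnds R).image spineEdge)
      (((R \ afterE π R).image (· - 1) ∪ escapes π R).image (apexEdge π)) := by
    refine disjoint_left.mpr fun x hx hx' => ?_
    obtain ⟨i, -, rfl⟩ := mem_image.mp hx
    obtain ⟨j, hj, hij⟩ := mem_image.mp hx'
    refine spineEdge_ne_apexEdge i ?_ hij.symm
    rcases mem_union.mp hj with hj | hj
    · have := hR _ (mem_sdiff.mp (succ_mem_of_mem_image_pred h0' hj)).1
      omega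
    · exact (mem_Icc.mp (mem_filter.mp hj).1).1
  rw [edgesMeeting, card_union_of_disjoint hboth, card_image_of_injective _ spineEdge_injective,
    card_image_of_injective _ apexEdge_injective, card_union_of_disjoint hspine,
    card_union_of_disjoint hapex, card_image_pred h0, card_image_pred h0',
    card_sdiff_of_subset (show afterE π R ⊆ R from filter_subset _ _)]
  have : (afterE π R).card ≤ R.card := card_le_card (filter_subset _ _)
  omega

end Escapes

/-- `R` stands for the free vertices of `B_{π,y(|π|+1)}` missing from a subextension. -/
structure OuterSetting (M : ℕ) (π : List Sym) (y : ℕ) (R : Finset ℕ) : Prop where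
  three_le : 3 ≤ M
  memPi : memPi π
  not_hasFan : ¬ hasFan π M
  length_eq : (π.count Sym.e = 0 ∧ π.length = 3 * M - 1) ∨
    (π.count Sym.e = 1 ∧ π.length = 2 * M) ∨ (π.count Sym.e = 2 ∧ π.length = M + 1)
  adj_top : (ladder π).Adj y (π.length + 1)
  nth_y : nth π y ≠ some Sym.e
  subset : R ⊆ Icc 2 π.length
  y_notMem : y ∉ R

namespace OuterSetting

variable {M : ℕ} {π : List Sym} {y : ℕ} {R : Finset ℕ} (S : OuterSetting M π y R)
include S

lemma zero_notMem : 0 ∉ R := fun h => by simpa using S.subset h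

lemma eq_length_or_eq_apex : y = π.length ∨ (nth π π.length ≠ some Sym.e ∧ y = apex π π.length) :=
  eq_or_eq_apex_of_adj_top S.memPi.1 S.adj_top

lemma nth_length_ne_e : nth π π.length ≠ some Sym.e := by
  rcases S.eq_length_or_eq_apex with rfl | ⟨h, -⟩
  exacts [S.nth_y, h]

lemma y_mem_Icc : y ∈ Icc 2 π.length := by
  have := S.three_le
  have hn : M + 1 ≤ π.length := by rcases S.length_eq with h | h | h <;> omega
  rw [mem_Icc]
  rcases S.eq_length_or_eq_apex with rfl | ⟨hne, rfl⟩
  · omega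
  obtain ⟨σ, hσ⟩ := exists_nth_eq_some (π := π) (mem_Icc.mpr ⟨by omega, le_rfl⟩)
  have := apex_le (π := π) π.length
  cases σ with
  | e => exact absurd hσ hne
  | one =>
    obtain ⟨k, hk⟩ : ∃ k, π.length = k + 1 := ⟨π.length - 1, by omega⟩
    rw [hk] at hσ ⊢
    rw [apex_succ_of_one hσ]
    omega
  | zero =>
    have := (le_apex_add_of_nth_eq_zero S.memPi S.not_hasFan hσ).1
    omega

lemma card_add_two_le : R.card + 2 ≤ π.length := by
  have hy := S.y_mem_Icc
  have := card_le_card (show R ⊆ (Icc 2 π.length).erase y from fun w hw =>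
    mem_erase.mpr ⟨fun h => S.y_notMem (h ▸ hw), S.subset hw⟩)
  rw [card_erase_of_mem hy, Nat.card_Icc] at this
  rw [mem_Icc] at hy
  omega

lemma card_afterE_le : (afterE π R).card ≤ π.count Sym.e := by
  simpa using card_afterE_add_card_le (π := π) S.zero_notMem (T := ∅) (by simp)

lemma nth_ne_e_of_count_le (hα : π.count Sym.e ≤ (afterE π R).card) {p : ℕ}
    (hp : p + 1 ∉ R) : nth π p ≠ some Sym.e := fun he => by
  have := card_afterE_add_card_le (π := π) S.zero_notMem (T := {p}) (by simp [he, hp])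
  simp only [card_singleton] at this
  omega

lemma nth_succ_eq_one_of_nth_eq_e {a b : ℕ} (hab : a ≤ b) (haR : a ∈ R) (hbR : b ∈ R)
    (hbe : nth π b = some Sym.e) (hdeep : IsDeep M π a b) :
    b + 1 ≤ π.length ∧ nth π (b + 1) = some Sym.one := by
  have ha := mem_Icc.mp (S.subset haR)
  have hbn : b + 1 ≤ π.length := by
    rcases eq_or_lt_of_le (mem_Icc.mp (S.subset hbR)).2 with rfl | h
    exacts [absurd hbe S.nth_length_ne_e, h]
  refine ⟨hbn, ?_⟩
  obtain ⟨σ, hσ⟩ := exists_nth_eq_some (π := π) (mem_Icc.mpr ⟨by omega, hbn⟩)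
  cases σ with
  | one => exact hσ
  | zero => exact absurd hσ (nth_succ_ne_zero_of_e S.memPi hbe)
  | e =>
    have := two_le_count_e hbe hσ (by omega)
    have := count_e_le_two S.memPi
    have : b + 1 ≠ π.length := fun h => S.nth_length_ne_e (h ▸ hσ)
    rcases hdeep with hlong | ⟨-, he⟩ | ⟨w, hw, he⟩
    · rcases S.length_eq with h | h | h <;> omega
    · have := (mem_Icc.mp (mem_Icc_of_nth_eq_some he)).1
      have := three_le_count_e he hbe hσ (by omega) (by omega)
      omega
    · have := mem_Icc.mp hw
      have := three_le_count_e he hbe hσ (by omega) (by omega)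
      omega

lemma nth_succ_eq_one_of_nth_pred_eq_e {a : ℕ} (haR : a ∈ R) (he : nth π (a - 1) = some Sym.e)
    (hae : nth π a ≠ some Sym.e) : a + 1 ≤ π.length ∧ nth π (a + 1) = some Sym.one := by
  have ha := mem_Icc.mp (S.subset haR)
  have hσ : nth π (a - 1 + 1) = some Sym.one := by
    obtain ⟨σ, hσ⟩ := exists_nth_eq_some (π := π) (mem_Icc.mpr ⟨by omega, ha.2⟩)
    rw [Nat.sub_add_cancel (by omega)]
    cases σ with
    | one => exact hσ
    | zero =>
      exact absurd (by rwa [Nat.sub_add_cancel (by omega)]) (nth_succ_ne_zero_of_e S.memPi he)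
    | e => exact absurd hσ hae
  have han : a + 1 ≤ π.length := by
    rcases eq_or_lt_of_le ha.2 with h | h
    · rcases S.eq_length_or_eq_apex with rfl | ⟨-, rfl⟩
      · exact absurd haR (h ▸ S.y_notMem)
      · have hap := apex_succ_of_one hσ
        rw [Nat.sub_add_cancel (by omega)] at hap
        exact absurd (h ▸ hap ▸ he) S.nth_y
    · omega
  refine ⟨han, ?_⟩
  have := nth_add_two_eq_one S.memPi he hσ (by omega)
  rwa [show a - 1 + 2 = a + 1 by omega] at this

/-- The escaping apex edge ends at `b + 1`, or else it is `(b, b + 2)`: if `π(b) = e` or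
`a = b`, the rules of `Π` force `π(b + 1) = 1`. -/
lemma escapes_nonempty {a b : ℕ} (hab : a ≤ b) (hsub : Icc a b ⊆ R) (hb1 : b + 1 ∉ R)
    (hend : b + 2 ∉ R ∨ (a < b ∧ nth π b ≠ some Sym.e)) (hdeep : IsDeep M π a b) :
    (escapes π R).Nonempty := by
  have haR : a ∈ R := hsub (mem_Icc.mpr ⟨le_rfl, hab⟩)
  have hbR : b ∈ R := hsub (mem_Icc.mpr ⟨hab, le_rfl⟩)
  have hb := mem_Icc.mp (S.subset hbR)
  by_cases hright : a < b ∧ nth π b ≠ some Sym.e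
  · have := le_apex_of_isDeep S.memPi S.not_hasFan hright.1 (mem_Icc.mpr ⟨by omega, hb.2⟩)
      hright.2 hdeep
    have := apex_le (π := π) b
    exact ⟨b, mem_escapes.mpr ⟨mem_Icc.mpr ⟨by omega, hb.2⟩, hright.2,
      hsub (mem_Icc.mpr ⟨by omega, by omega⟩), hb1⟩⟩
  suffices h : b + 1 ≤ π.length ∧ nth π (b + 1) = some Sym.one from
    ⟨b + 1, succ_mem_escapes hbR (hend.resolve_right hright) h.1 h.2⟩
  by_cases hbe : nth π b = some Sym.e
  · exact S.nth_succ_eq_one_of_nth_eq_e hab haR hbR hbe hdeep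
  obtain rfl : a = b := by
    have : ¬ a < b := fun h => hright ⟨h, hbe⟩
    omega
  obtain ⟨w, hw, he⟩ : ∃ w ∈ Icc a a, nth π (w - 1) = some Sym.e := by
    have := S.three_le
    rcases hdeep with h | h | h
    · omega
    · omega
    · exact h
  rw [show w = a by rw [mem_Icc] at hw; omega] at he
  exact S.nth_succ_eq_one_of_nth_pred_eq_e hbR he hbe

lemma two_le_card_escapes {a b : ℕ} (hab : a < b) (hsub : Icc a b ⊆ R) (hb1 : b + 1 ∉ R)
    (hb2 : b + 2 ∉ R) (hbe : nth π b ≠ some Sym.e) (hbe1 : nth π (b + 1) ≠ some Sym.e)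
    (hdeep : IsDeep M π a b) : 2 ≤ (escapes π R).card := by
  have hbR : b ∈ R := hsub (mem_Icc.mpr ⟨hab.le, le_rfl⟩)
  have hb := mem_Icc.mp (S.subset hbR)
  have hapex := le_apex_of_isDeep S.memPi S.not_hasFan hab (mem_Icc.mpr ⟨by omega, hb.2⟩) hbe
    hdeep
  have hapexR : apex π b ∈ R := hsub (mem_Icc.mpr ⟨hapex, (apex_le b).trans (by omega)⟩)
  have hbn : b + 1 ≤ π.length := by
    rcases eq_or_lt_of_le hb.2 with h | h
    · rcases S.eq_length_or_eq_apex with rfl | ⟨-, rfl⟩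
      · exact absurd hbR (h ▸ S.y_notMem)
      · exact absurd hapexR (h ▸ S.y_notMem)
    · omega
  have hb1R : apex π (b + 1) ∈ R := by
    obtain ⟨σ, hσ⟩ := exists_nth_eq_some (π := π) (mem_Icc.mpr ⟨by omega, hbn⟩)
    cases σ with
    | one => rwa [apex_succ_of_one hσ]
    | zero => rwa [apex_succ_of_zero hσ]
    | e => exact absurd hσ hbe1
  have hsub' : {b, b + 1} ⊆ escapes π R := by
    simp only [insert_subset_iff, singleton_subset_iff, escapes, mem_filter, mem_Icc]
    exact ⟨⟨⟨by omega, hb.2⟩, hbe, hapexR, hb1⟩, ⟨⟨by omega, hbn⟩, hbe1, hb1R, hb2⟩⟩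
  simpa [card_pair] using card_le_card hsub'

lemma two_le_card_escapes_of_eq_Icc {a b : ℕ} (hR : R = Icc a b)
    (hεα : π.count Sym.e ≤ (afterE π R).card) (h : (afterE π R).card = 2 ∨ M ≤ R.card) :
    2 ≤ (escapes π R).card := by
  have hb1 : b + 1 ∉ R := by rw [hR, mem_Icc]; omega
  have hb2 : b + 2 ∉ R := by rw [hR, mem_Icc]; omega
  rcases h with h | h
  · obtain ⟨u, hu, v, hv, huv⟩ := one_lt_card.mp (show 1 < (afterE π R).card by omega)
    have := mem_Icc.mp (hR ▸ (mem_filter.mp hu).1)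
    have := mem_Icc.mp (hR ▸ (mem_filter.mp hv).1)
    exact S.two_le_card_escapes (by omega) hR.ge hb1 hb2 (S.nth_ne_e_of_count_le hεα hb1)
      (S.nth_ne_e_of_count_le hεα hb2) (isDeep_of_mem_afterE hu (hR ▸ (mem_filter.mp hu).1))
  · have := S.three_le
    have : R.card = b + 1 - a := by rw [hR, Nat.card_Icc]
    exact S.two_le_card_escapes (by omega) hR.ge hb1 hb2 (S.nth_ne_e_of_count_le hεα hb1)
      (S.nth_ne_e_of_count_le hεα hb2) (.inl (by omega))

lemma exists_card_le_mul_of_eq_Icc {a b : ℕ} (hab : a ≤ b) (hR : R = Icc a b) :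
    ∃ c, R.card ≤ (M - 1) * c ∧ c + (afterE π R).card ≤ 1 + (escapes π R).card := by
  have hr : R.card = b + 1 - a := by rw [hR, Nat.card_Icc]
  have hF1 (h : 1 ≤ (afterE π R).card ∨ M ≤ R.card) : 1 ≤ (escapes π R).card := by
    refine card_pos.mpr (S.escapes_nonempty hab hR.ge (by rw [hR, mem_Icc]; omega)
      (.inl (by rw [hR, mem_Icc]; omega)) ?_)
    rcases h with h | h
    · obtain ⟨w, hw⟩ := card_pos.mp h
      exact isDeep_of_mem_afterE hw (hR ▸ (mem_filter.mp hw).1)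
    · exact .inl (by omega)
  have hF2 := S.two_le_card_escapes_of_eq_Icc hR
  have := S.card_add_two_le
  have := S.card_afterE_le
  have := S.length_eq
  rcases (show R.card + 1 ≤ M ∨ (M ≤ R.card ∧ R.card + 2 ≤ 2 * M) ∨ 2 * M ≤ R.card + 1 by omega)
    with h | h | h
  · refine ⟨1, by omega, ?_⟩
    rcases (show (afterE π R).card = 0 ∨ (afterE π R).card = 1 ∨ (afterE π R).card = 2 by omega)
      with hα | hα | hα
    · omega
    · have := hF1 (.inl (by omega))
      omega
    · have := hF2 (by omega) (.inl hα)
      omega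
  · refine ⟨2, by omega, ?_⟩
    rcases (show (afterE π R).card = 0 ∨ (afterE π R).card = 1 by omega) with hα | hα
    · have := hF1 (.inr h.1)
      omega
    · have := hF2 (by omega) (.inr h.1)
      omega
  · refine ⟨3, by omega, ?_⟩
    have := hF2 (by omega) (.inr (by omega))
    omega

lemma escapes_nonempty_of_eq_Icc_union_Icc {a₁ b₁ a₂ b₂ : ℕ} (h₁ : a₁ ≤ b₁)
    (h₁₂ : b₁ + 2 ≤ a₂) (h₂ : a₂ ≤ b₂) (hR : R = Icc a₁ b₁ ∪ Icc a₂ b₂)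
    (hεα : π.count Sym.e ≤ (afterE π R).card)
    (h : (afterE π R).card = 2 ∨ (1 ≤ (afterE π R).card ∧ M ≤ R.card) ∨ 2 * M ≤ R.card + 1) :
    (escapes π R).Nonempty := by
  have hmem (x : ℕ) : x ∈ R ↔ (a₁ ≤ x ∧ x ≤ b₁) ∨ (a₂ ≤ x ∧ x ≤ b₂) := by simp [hR]
  have hr : R.card = (b₁ + 1 - a₁) + (b₂ + 1 - a₂) := by
    rw [hR, card_union_of_disjoint (disjoint_left.mpr fun x h h' => by
      simp only [mem_Icc] at h h'; omega), Nat.card_Icc, Nat.card_Icc]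
  have hb₁ : b₁ + 1 ∉ R := by rw [hmem]; omega
  have run₁ (hlt : a₁ < b₁) (hd : IsDeep M π a₁ b₁) : (escapes π R).Nonempty :=
    S.escapes_nonempty h₁ (hR ▸ subset_union_left) hb₁
      (.inr ⟨hlt, S.nth_ne_e_of_count_le hεα hb₁⟩) hd
  have run₂ (hd : IsDeep M π a₂ b₂) : (escapes π R).Nonempty :=
    S.escapes_nonempty h₂ (hR ▸ subset_union_right) (by rw [hmem]; omega)
      (.inl (by rw [hmem]; omega)) hd
  have hafter {w : ℕ} (hw : w ∈ afterE π R) : w ∈ Icc a₁ b₁ ∨ w ∈ Icc a₂ b₂ := by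
    simpa only [mem_Icc] using (hmem w).mp (mem_filter.mp hw).1
  rcases h with h | ⟨h, hM⟩ | h
  · obtain ⟨u, hu, v, hv, huv⟩ := one_lt_card.mp (show 1 < (afterE π R).card by omega)
    rcases hafter hu, hafter hv with ⟨hu' | hu', hv' | hv'⟩
    · exact run₁ (by simp only [mem_Icc] at hu' hv'; omega) (isDeep_of_mem_afterE hu hu')
    · exact run₂ (isDeep_of_mem_afterE hv hv')
    all_goals exact run₂ (isDeep_of_mem_afterE hu hu')
  · obtain ⟨w, hw⟩ := card_pos.mp h
    rcases hafter hw with hw' | hw'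
    · rcases eq_or_lt_of_le h₁ with heq | hlt
      · have hwa : w = a₁ := by rw [mem_Icc] at hw'; omega
        by_cases ha₂ : a₂ = b₁ + 2
        · refine run₂ (.inr (.inl ⟨by omega, ?_⟩))
          rw [show a₂ - 3 = w - 1 by omega]
          exact (mem_filter.mp hw).2
        · exact S.escapes_nonempty h₁ (hR ▸ subset_union_left) hb₁ (.inl (by rw [hmem]; omega))
            (isDeep_of_mem_afterE hw hw')
      · exact run₁ hlt (isDeep_of_mem_afterE hw hw')
    · exact run₂ (isDeep_of_mem_afterE hw hw')
  · by_cases hlong : a₂ + M ≤ b₂ + 1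
    · exact run₂ (.inl hlong)
    · exact run₁ (by omega) (.inl (by omega))

lemma exists_card_le_mul_of_eq_Icc_union_Icc {a₁ b₁ a₂ b₂ : ℕ} (h₁ : a₁ ≤ b₁) (h₁₂ : b₁ + 2 ≤ a₂)
    (h₂ : a₂ ≤ b₂) (hR : R = Icc a₁ b₁ ∪ Icc a₂ b₂) :
    ∃ c, R.card ≤ (M - 1) * c ∧ c + (afterE π R).card ≤ 2 + (escapes π R).card := by
  have hF hεα h := card_pos.mpr (S.escapes_nonempty_of_eq_Icc_union_Icc h₁ h₁₂ h₂ hR hεα h)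
  have := S.card_add_two_le
  have := S.card_afterE_le
  have := S.length_eq
  rcases (show R.card + 1 ≤ M ∨ (M ≤ R.card ∧ R.card + 2 ≤ 2 * M) ∨ 2 * M ≤ R.card + 1 by omega)
    with h | h | h
  · refine ⟨1, by omega, ?_⟩
    by_cases hα : (afterE π R).card = 2
    · have := hF (by omega) (.inl hα)
      omega
    · omega
  · refine ⟨2, by omega, ?_⟩
    by_cases hα : (afterE π R).card = 1
    · have := hF (by omega) (.inr (.inl ⟨hα.ge, h.1⟩))
      omega
    · omega
  · refine ⟨3, by omega, ?_⟩
    have := hF (by omega) (.inr (.inr h))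
    omega

/-- Every run of `R` that is long or contains a vertex with a single backward edge pays for
itself with escaping apex edges; `c` is about `r / (M - 1)`. -/
theorem exists_card_le_mul :
    ∃ c, R.card ≤ (M - 1) * c ∧
      c + (afterE π R).card ≤ (rightEnds R).card + (escapes π R).card := by
  rcases (show (rightEnds R).card = 0 ∨ (rightEnds R).card = 1 ∨ (rightEnds R).card = 2 ∨
      3 ≤ (rightEnds R).card by omega) with hk | hk | hk | hk
  · obtain rfl : R = ∅ := by
      by_contra hR
      have := max'_mem_rightEnds (nonempty_iff_ne_empty.mpr hR)
      simp_all
    exact ⟨0, by simp, by simp [afterE]⟩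
  · obtain ⟨a, b, hab, hR⟩ := eq_Icc_of_card_rightEnds_eq_one hk
    obtain ⟨c, h, h'⟩ := S.exists_card_le_mul_of_eq_Icc hab hR
    exact ⟨c, h, by omega⟩
  · obtain ⟨a₁, b₁, a₂, b₂, h₁, h₁₂, h₂, hR⟩ := eq_Icc_union_Icc_of_card_rightEnds_eq_two hk
    obtain ⟨c, h, h'⟩ := S.exists_card_le_mul_of_eq_Icc_union_Icc h₁ h₁₂ h₂ hR
    exact ⟨c, h, by omega⟩
  · have := S.card_add_two_le
    have := S.card_afterE_le
    rcases S.length_eq with ⟨hε, hn⟩ | ⟨hε, hn⟩ | ⟨hε, hn⟩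
    exacts [⟨3, by omega, by omega⟩, ⟨2, by omega, by omega⟩, ⟨1, by omega, by omega⟩]

lemma length_sub_two_eq :
    π.length - 2 = (M - 1) * (3 - π.count Sym.e) := by
  rcases S.length_eq with ⟨hε, hn⟩ | ⟨hε, hn⟩ | ⟨hε, hn⟩ <;> rw [hε] <;> omega

theorem card_mul_add_le :
    R.card * (3 - π.count Sym.e) + (afterE π R).card * (π.length - 2) ≤
      ((rightEnds R).card + (escapes π R).card) * (π.length - 2) := by
  obtain ⟨c, hc, hcα⟩ := S.exists_card_le_mul
  rw [S.length_sub_two_eq]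
  calc R.card * (3 - π.count Sym.e) + (afterE π R).card * ((M - 1) * (3 - π.count Sym.e))
      ≤ (M - 1) * c * (3 - π.count Sym.e) +
          (afterE π R).card * ((M - 1) * (3 - π.count Sym.e)) := by gcongr
    _ = (c + (afterE π R).card) * ((M - 1) * (3 - π.count Sym.e)) := by ring
    _ ≤ _ := by gcongr

lemma edgesMeeting_spec {x : Sym2 ℕ} (hx : x ∈ edgesMeeting π R) :
    x ∈ ladderEdges π ∧ ∃ v ∈ R, v ∈ x := by
  have h0 := S.zero_notMem
  have hRn (w : ℕ) (hw : w ∈ R) := mem_Icc.mp (S.subset hw)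
  simp only [edgesMeeting, mem_union, mem_image (s := _ ∪ _)] at hx
  rcases hx with ⟨j, hj | hj, rfl⟩ | ⟨j, hj | hj, rfl⟩
  · have hjR := succ_mem_of_mem_image_pred h0 hj
    have := hRn _ hjR
    exact ⟨mem_ladderEdges.mpr ⟨j, mem_Icc.mpr ⟨by omega, by omega⟩, .inl rfl⟩,
      j + 1, hjR, Sym2.mem_mk_right _ _⟩
  · have hjR := (mem_filter.mp hj).1
    have := hRn _ hjR
    exact ⟨mem_ladderEdges.mpr ⟨j, mem_Icc.mpr ⟨by omega, by omega⟩, .inl rfl⟩,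
      j, hjR, Sym2.mem_mk_left _ _⟩
  · obtain ⟨hjR, hje⟩ := mem_sdiff.mp
      (succ_mem_of_mem_image_pred (fun h => h0 (mem_sdiff.mp h).1) hj)
    have := hRn _ hjR
    refine ⟨mem_ladderEdges.mpr ⟨j, mem_Icc.mpr ⟨by omega, by omega⟩, .inr ⟨fun he => hje ?_, rfl⟩⟩,
      j + 1, hjR, Sym2.mem_mk_right _ _⟩
    exact mem_filter.mpr ⟨hjR, by simpa using he⟩
  · obtain ⟨hj, hje, hapex, -⟩ := mem_filter.mp hj
    exact ⟨mem_ladderEdges.mpr ⟨j, hj, .inr ⟨hje, rfl⟩⟩, apex π j, hapex, Sym2.mem_mk_left _ _⟩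

lemma edgesMeeting_subset_backEdges :
    ↑(edgesMeeting π R) ⊆ backEdges π y (π.length + 1) := by
  intro x hx
  obtain ⟨hxL, v, hvR, hvx⟩ := S.edgesMeeting_spec hx
  refine ⟨by rw [edgeSet_ladder S.memPi.1]; exact hxL, fun hI => ?_⟩
  have := mem_Icc.mp (S.subset hvR)
  have hv := hI v hvx
  simp only [mem_insert, mem_singleton] at hv
  rcases hv with rfl | rfl | rfl | rfl
  · omega
  · omega
  · exact S.y_notMem hvR
  · omega

lemma ncard_add_card_edgesMeeting_le {E : Set (Sym2 ℕ)} {s : Finset ℕ}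
    (hE : E ⊆ backEdges π y (π.length + 1)) (hEs : ∀ e ∈ E, ∀ x ∈ e, x ∈ s)
    (hRs : Disjoint R s) :
    E.ncard + (edgesMeeting π R).card ≤ (backEdges π y (π.length + 1)).ncard := by
  have hfin : (backEdges π y (π.length + 1)).Finite :=
    (Finset.finite_toSet _).subset (backEdges_subset S.memPi.1 _ _)
  have hdisj : Disjoint E ↑(edgesMeeting π R) := Set.disjoint_left.mpr fun x hxE hx => by
    obtain ⟨-, v, hvR, hvx⟩ := S.edgesMeeting_spec hx
    exact disjoint_left.mp hRs hvR (hEs x hxE v hvx)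
  rw [← Set.ncard_coe_finset, ← Set.ncard_union_eq hdisj (hfin.subset hE)
    (Finset.finite_toSet _)]
  exact Set.ncard_le_ncard (Set.union_subset hE S.edgesMeeting_subset_backEdges) hfin

end OuterSetting

lemma div_le_div_of_counts {e b r d t x α : ℕ} (hrd : r ≤ d) (hlow : e + 2 * r + x ≤ b + α)
    (hup : b ≤ 2 * d + t) (hkey : r * t + α * d ≤ x * d) :
    (e : ℝ) / ((d - r : ℕ) : ℝ) ≤ b / d := by
  rcases eq_or_lt_of_le hrd with rfl | hlt
  · simp only [Nat.sub_self, CharP.cast_eq_zero, div_zero]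
    positivity
  have hlow' : (e : ℝ) + 2 * r + x ≤ b + α := by exact_mod_cast hlow
  have hup' : (b : ℝ) ≤ 2 * d + t := by exact_mod_cast hup
  have hkey' : (r : ℝ) * t + α * d ≤ x * d := by exact_mod_cast hkey
  have hr : (0 : ℝ) ≤ r := by positivity
  have hd : (r : ℝ) < d := by exact_mod_cast hlt
  rw [Nat.cast_sub hrd, div_le_div_iff₀ (by linarith) (by linarith)]
  -- `e d ≤ (b + α - 2r - x) d ≤ b d - r (2d + t) ≤ b (d - r)`
  nlinarith [mul_le_mul_of_nonneg_right hlow' (hr.trans hd.le), mul_le_mul_of_nonneg_left hup' hr]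

lemma card_add_card_sdiff_eq {n y : ℕ} {s : Finset ℕ} (hI : {0, 1, y, n + 1} ⊆ s)
    (hs : s ⊆ range (n + 2)) : s.card + ((Icc 2 n).erase y \ s).card = n + 2 := by
  rw [← card_range (n + 2), ← card_sdiff_add_card_eq_card hs, add_comm]
  congr 2
  ext x
  simp only [insert_subset_iff, singleton_subset_iff] at hI
  simp only [mem_sdiff, mem_range, mem_erase, mem_Icc]
  constructor
  · rintro ⟨⟨-, -, hx⟩, hxs⟩
    exact ⟨by omega, hxs⟩
  · rintro ⟨hx, hxs⟩
    refine ⟨⟨fun h => hxs (h ▸ hI.2.2.1), ?_, ?_⟩, hxs⟩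
    · by_contra h
      interval_cases x
      exacts [hxs hI.1, hxs hI.2.1]
    · by_contra h
      exact hxs ((show x = n + 1 by omega) ▸ hI.2.2.2)

/-- Let `M ≥ 3`, `π ∈ B_M`, and let `yz` be an outer boundary edge of
`L_π`. Then the backward extension `B_{π,yz}` is balanced: its density `m_B` is at least
the density `m_K` of every subextension `K` (given by a vertex set `s ⊇ {0,1,y,z}` and an
edge set `E ⊆ E_B` of edges with both endpoints in `s`). -/
theorem backward_extension_balanced (M : ℕ) (hM : 3 ≤ M) (π : List Sym)
    (hπ : memB M π) (y z : ℕ) (h : IsOuterBoundaryEdge M π y z)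
    (s : Finset ℕ) (E : Set (Sym2 ℕ))
    (hIs : ({0, 1, y, z} : Finset ℕ) ⊆ s) (hsv : s ⊆ Finset.range (π.length + 2))
    (hE : E ⊆ backEdges π y z) (hEs : ∀ e ∈ E, ∀ x ∈ e, x ∈ s) :
    (E.ncard : ℝ) / ((s.card - ({0, 1, y, z} : Finset ℕ).card : ℕ) : ℝ) ≤
      ((backEdges π y z).ncard : ℝ) /
        ((π.length + 2 - ({0, 1, y, z} : Finset ℕ).card : ℕ) : ℝ) := by
  obtain ⟨hP, -, hfan, -⟩ := hπ
  obtain ⟨⟨-, -, hadj, hy, -⟩, rfl, hlen⟩ := h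
  set R := (Icc 2 π.length).erase y \ s
  have S : OuterSetting M π y R := ⟨hM, hP, hfan, hlen, hadj, hy,
    fun w hw => (mem_erase.mp (mem_sdiff.mp hw).1).2,
    fun hyR => (mem_erase.mp (mem_sdiff.mp hyR).1).1 rfl⟩
  have hy2 := mem_Icc.mp S.y_mem_Icc
  have hI : ({0, 1, y, π.length + 1} : Finset ℕ).card = 4 := by
    rw [card_insert_of_notMem (by simp only [mem_insert, mem_singleton]; omega),
      card_insert_of_notMem (by simp only [mem_insert, mem_singleton]; omega),
      card_pair (by omega)]
  have hs : s.card + R.card = π.length + 2 := card_add_card_sdiff_eq hIs hsv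
  have hr := S.card_add_two_le
  rw [hI, show s.card - 4 = π.length - 2 - R.card by omega,
    show π.length + 2 - 4 = π.length - 2 by omega]
  refine div_le_div_of_counts (by omega) ?_ ?_ S.card_mul_add_le
  · have := S.ncard_add_card_edgesMeeting_le hE hEs sdiff_disjoint
    have := card_edgesMeeting (π := π) fun w hw => (mem_Icc.mp (S.subset hw)).1
    omega
  · have := ncard_backEdges_add_le hP.1 hadj
    omega

end TriangleRemoval
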